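/- Let η be convex and differentiable and f convex and differentiable with q(u) = ∫₀ᵘ η'f' dξ. For any u < v and any s with (v-u)·s = f(v) - f(u), one has ∫ᵤᵛ η'(ξ)(f'(ξ) - s) dξ ≥ 0, i.e., s(η(u) - η(v)) - (q(u) - q(v)) ≥ 0. -/

import Mathlib

/-!
Since `f'` is monotone, `f' - s` changes sign at most once on `[u, v]`, say at `c`, and since
`η'` is monotone, `η'(ξ) (f'(ξ) - s) ≥ η'(c) (f'(ξ) - s)` for every `ξ ∈ [u, v]`. The
Rankine–Hugoniot condition says exactly that `∫ᵤᵛ (f' - s) = 0`, so the right-hand side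
integrates to zero.
-/

open MeasureTheory (volume)
open intervalIntegral Set

theorem LocallyBoundedVariationOn.intervalIntegrable {g : ℝ → ℝ} {a b : ℝ}
    (hg : LocallyBoundedVariationOn g (uIcc a b)) : IntervalIntegrable g volume a b := by
  obtain ⟨p, q, hp, hq, rfl⟩ := hg.exists_monotoneOn_sub_monotoneOn
  exact hp.intervalIntegrable.sub hq.intervalIntegrable

theorem MonotoneOn.intervalIntegrable_mul {g h : ℝ → ℝ} {a b : ℝ} (hh : MonotoneOn h (uIcc a b))
    (hg : MonotoneOn g (uIcc a b)) : IntervalIntegrable (fun x ↦ h x * g x) volume a b :=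
  (hh.locallyBoundedVariationOn.mul hg.locallyBoundedVariationOn).intervalIntegrable

theorem MonotoneOn.exists_sign_change {g : ℝ → ℝ} {u v : ℝ} (huv : u ≤ v)
    (hg : MonotoneOn g (Icc u v)) :
    ∃ c ∈ Icc u v, ∀ ξ ∈ Icc u v, (ξ < c → g ξ ≤ 0) ∧ (c < ξ → 0 ≤ g ξ) := by
  -- `u` is inserted so that `S` is nonempty and `sSup S` is not the junk value `0`.
  set S := insert u {x ∈ Icc u v | g x ≤ 0}
  have hSv : ∀ x ∈ S, x ≤ v := by rintro x (rfl | hx); exacts [huv, hx.1.2]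
  have huS : u ∈ S := mem_insert u _
  have hS : BddAbove S := ⟨v, hSv⟩
  refine ⟨sSup S, ⟨le_csSup hS huS, csSup_le ⟨u, huS⟩ hSv⟩,
    fun ξ hξ ↦ ⟨fun hξc ↦ ?_, fun hcξ ↦ ?_⟩⟩
  · by_contra! hpos
    refine hξc.not_ge (csSup_le ⟨u, huS⟩ ?_)
    rintro x (rfl | hx)
    · exact hξ.1
    · by_contra! hξx
      exact (hx.2.trans_lt hpos).not_ge (hg hξ hx.1 hξx.le)
  · by_contra! hneg
    exact hcξ.not_ge (le_csSup hS (mem_insert_of_mem u ⟨hξ, hneg.le⟩))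

theorem MonotoneOn.integral_mul_nonneg {g h : ℝ → ℝ} {u v : ℝ} (huv : u ≤ v)
    (hh : MonotoneOn h (Icc u v)) (hg : MonotoneOn g (Icc u v))
    (hg₀ : ∫ x in u..v, g x = 0) : 0 ≤ ∫ x in u..v, h x * g x := by
  obtain ⟨c, hc, hsign⟩ := hg.exists_sign_change huv
  have hpointwise : ∀ ξ ∈ Icc u v, h c * g ξ ≤ h ξ * g ξ := by
    intro ξ hξ
    rcases lt_trichotomy ξ c with hξc | rfl | hcξ
    · exact mul_le_mul_of_nonpos_right (hh hξ hc hξc.le) ((hsign ξ hξ).1 hξc)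
    · exact le_rfl
    · exact mul_le_mul_of_nonneg_right (hh hc hξ hcξ.le) ((hsign ξ hξ).2 hcξ)
  rw [← uIcc_of_le huv] at hh hg
  calc 0 = ∫ x in u..v, h c * g x := by rw [integral_const_mul, hg₀, mul_zero]
    _ ≤ ∫ x in u..v, h x * g x :=
      integral_mono_on huv (hg.intervalIntegrable.const_mul _)
        (hh.intervalIntegrable_mul hg) hpointwise

/-- Shock admissibility for convex fluxes: for `u < v` and the
Rankine–Hugoniot slope `s`, one has `∫ᵤᵛ η'(ξ)(f'(ξ) - s) dξ ≥ 0`, i.e.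
`s(η(u) - η(v)) - (q(u) - q(v)) ≥ 0`. -/
theorem shock_admissibility_convex
    (f η : ℝ → ℝ)
    (hf : ConvexOn ℝ Set.univ f) (hη : ConvexOn ℝ Set.univ η)
    (hfd : Differentiable ℝ f) (hηd : Differentiable ℝ η)
    (q : ℝ → ℝ) (hq : ∀ u : ℝ, q u = ∫ ξ in (0:ℝ)..u, deriv η ξ * deriv f ξ)
    (u v s : ℝ) (huv : u < v) (hs : (v - u) * s = f v - f u) :
    (0 ≤ ∫ ξ in u..v, deriv η ξ * (deriv f ξ - s)) ∧
    0 ≤ s * (η u - η v) - (q u - q v) := by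
  have hf' : Monotone (deriv f) := monotoneOn_univ.mp (hf.monotoneOn_deriv fun x _ ↦ hfd x)
  have hη' : Monotone (deriv η) := monotoneOn_univ.mp (hη.monotoneOn_deriv fun x _ ↦ hηd x)
  have hη'f' (a b : ℝ) : IntervalIntegrable (fun ξ ↦ deriv η ξ * deriv f ξ) volume a b :=
    (hη'.monotoneOn _).intervalIntegrable_mul (hf'.monotoneOn _)
  have hRH : ∫ ξ in u..v, (deriv f ξ - s) = 0 := by
    rw [integral_sub hf'.intervalIntegrable intervalIntegrable_const,
      integral_deriv_eq_sub (fun x _ ↦ hfd x) hf'.intervalIntegrable, integral_const, smul_eq_mul,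
      ← hs, sub_self]
  have hentropy : ∫ ξ in u..v, deriv η ξ * (deriv f ξ - s) = (q v - q u) - s * (η v - η u) := by
    simp_rw [mul_sub]
    rw [integral_sub (hη'f' u v) (hη'.intervalIntegrable.mul_const s), integral_mul_const,
      integral_deriv_eq_sub (fun x _ ↦ hηd x) hη'.intervalIntegrable, hq u, hq v,
      integral_interval_sub_left (hη'f' 0 v) (hη'f' 0 u)]
    ring
  have hf's : Monotone fun ξ ↦ deriv f ξ - s := fun _ _ hxy ↦ sub_le_sub_right (hf' hxy) s
  have hdiss := (hη'.monotoneOn _).integral_mul_nonneg huv.le (hf's.monotoneOn _) hRH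
  exact ⟨hdiss, by linarith⟩
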